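/- Let X ≥ 0 be a nonnegative random variable with distribution F and n-th moment m_n = E[X^n] ∈ (0,∞) for some integer n ≥ 1. Let F_{(n)} be the n-th order equilibrium distribution with respect to F, L_{(n)}(λ) = ∫₀^∞ e^{−λx} dF_{(n)}(x) its Laplace–Stieltjes transform, and let Y > 0 be a random variable with distribution function G(y) = 1 − L_{(n)}(y), y ≥ 0. If E[X^s] < ∞ for some s ∈ (n−1, n), then E[Y^{n−s}] = (n!·(n−s)·π / (m_n·Γ(s+1)·sin((n−s)π))) · E[X^s]. -/

import Mathlib

open MeasureTheory Real Set Filter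

/-- The `n`-th order equilibrium distribution of a law `ν` on `[0,∞)`:
`F_{(0)} = F`, and `F_{(k+1)}` has density `x ↦ (1 - F_{(k)}(x)) / mean(F_{(k)})` on `[0,∞)`. -/
noncomputable def equilib (ν : Measure ℝ) : ℕ → Measure ℝ
  | 0 => ν
  | k + 1 =>
    (volume.restrict (Ici (0 : ℝ))).withDensity
      (fun x => equilib ν k (Ioi x) / ∫⁻ y, ENNReal.ofReal y ∂(equilib ν k))

open scoped ENNReal NNReal

namespace Stmt12Aux

noncomputable def Lm (m : Measure ℝ) (r : ℝ) : ℝ≥0∞ := ∫⁻ x, ENNReal.ofReal (x ^ r) ∂m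

lemma measurable_ofReal_rpow (r : ℝ) : Measurable fun x : ℝ => ENNReal.ofReal (x ^ r) :=
  (measurable_id.pow measurable_const).ennreal_ofReal

lemma ae_nonneg_of_Iio (m : Measure ℝ) (h0 : m (Iio 0) = 0) : 0 ≤ᵐ[m] fun x : ℝ => x := by
  rw [EventuallyLE, ae_iff]
  convert h0 using 2
  ext x
  simp [not_le]

lemma layercake (m : Measure ℝ) (h0 : m (Iio 0) = 0) {q : ℝ} (hq : 0 < q) :
    Lm m q = ENNReal.ofReal q * ∫⁻ t in Ioi 0, m (Ioi t) * ENNReal.ofReal (t ^ (q - 1)) := by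
  have := lintegral_rpow_eq_lintegral_meas_lt_mul m (ae_nonneg_of_Iio m h0)
      measurable_id.aemeasurable hq
  simpa [Lm, Ioi] using this

lemma equilib_succ (ν : Measure ℝ) (k : ℕ) :
    equilib ν (k+1) = (volume.restrict (Ici (0 : ℝ))).withDensity
      (fun x => equilib ν k (Ioi x) / ∫⁻ y, ENNReal.ofReal y ∂(equilib ν k)) := rfl

lemma measurable_tail (m : Measure ℝ) : Measurable fun x : ℝ => m (Ioi x) :=
  Antitone.measurable (fun _ _ hab => measure_mono (Ioi_subset_Ioi hab))

lemma step_singleton (m : Measure ℝ) :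
    ((volume.restrict (Ici (0 : ℝ))).withDensity
      (fun x => m (Ioi x) / ∫⁻ y, ENNReal.ofReal y ∂m)) {0} = 0 := by
  rw [withDensity_apply _ (measurableSet_singleton 0), Measure.restrict_restrict
    (measurableSet_singleton 0)]
  have : volume.restrict (({0} : Set ℝ) ∩ Ici 0) = 0 := by
    rw [Measure.restrict_eq_zero]
    exact measure_mono_null Set.inter_subset_left (by simp)
  rw [this, lintegral_zero_measure]

lemma step_Iio (m : Measure ℝ) :
    ((volume.restrict (Ici (0 : ℝ))).withDensity
      (fun x => m (Ioi x) / ∫⁻ y, ENNReal.ofReal y ∂m)) (Iio 0) = 0 := by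
  rw [withDensity_apply _ measurableSet_Iio, Measure.restrict_restrict measurableSet_Iio]
  have : volume.restrict ((Iio (0:ℝ)) ∩ Ici 0) = 0 := by
    rw [Measure.restrict_eq_zero]
    have : (Iio (0:ℝ)) ∩ Ici 0 = ∅ := by ext x; simp [Set.Iio_inter_Ici]
    simp [this]
  rw [this, lintegral_zero_measure]

lemma lintegral_step (m : Measure ℝ) (hM0 : (∫⁻ y, ENNReal.ofReal y ∂m) ≠ 0)
    {g : ℝ → ℝ≥0∞} (hg : Measurable g) :
    ∫⁻ x, g x ∂((volume.restrict (Ici (0 : ℝ))).withDensity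
      (fun x => m (Ioi x) / ∫⁻ y, ENNReal.ofReal y ∂m))
      = (∫⁻ x in Ioi 0, m (Ioi x) * g x) * (∫⁻ y, ENNReal.ofReal y ∂m)⁻¹ := by
  set M := ∫⁻ y, ENNReal.ofReal y ∂m with hM
  rw [lintegral_withDensity_eq_lintegral_mul _ ((measurable_tail m).div_const M) hg,
    ← MeasureTheory.restrict_Ioi_eq_restrict_Ici]
  have : ∀ x : ℝ, ((fun x => m (Ioi x) / M) * g) x = (m (Ioi x) * g x) * M⁻¹ := by
    intro x; simp [div_eq_mul_inv]; ring
  simp_rw [this]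
  rw [lintegral_mul_const' _ _ (by simpa using hM0)]

end Stmt12Aux

namespace Stmt12Aux
open scoped ENNReal

lemma Lm_one (m : Measure ℝ) : Lm m 1 = ∫⁻ y, ENNReal.ofReal y ∂m := by
  simp [Lm]

lemma Lm_zero (m : Measure ℝ) : Lm m 0 = m univ := by
  simp [Lm]

lemma step_moment (m : Measure ℝ) (h0 : m (Iio 0) = 0)
    (hM0 : (∫⁻ y, ENNReal.ofReal y ∂m) ≠ 0) (hMt : (∫⁻ y, ENNReal.ofReal y ∂m) ≠ ∞)
    {r : ℝ} (hr : -1 < r) :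
    ENNReal.ofReal (r+1) * (∫⁻ y, ENNReal.ofReal y ∂m) *
      Lm ((volume.restrict (Ici (0 : ℝ))).withDensity
        (fun x => m (Ioi x) / ∫⁻ y, ENNReal.ofReal y ∂m)) r
      = Lm m (r+1) := by
  set M := ∫⁻ y, ENNReal.ofReal y ∂m with hM
  have h1 : Lm ((volume.restrict (Ici (0 : ℝ))).withDensity
      (fun x => m (Ioi x) / M)) r
      = (∫⁻ x in Ioi 0, m (Ioi x) * ENNReal.ofReal (x ^ r)) * M⁻¹ :=
    lintegral_step m hM0 (measurable_ofReal_rpow r)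
  rw [h1, layercake m h0 (show (0:ℝ) < r + 1 by linarith), add_sub_cancel_right]
  calc ENNReal.ofReal (r+1) * M * ((∫⁻ x in Ioi 0, m (Ioi x) * ENNReal.ofReal (x ^ r)) * M⁻¹)
      = ENNReal.ofReal (r+1) * (∫⁻ x in Ioi 0, m (Ioi x) * ENNReal.ofReal (x ^ r)) * (M * M⁻¹) :=
        by ring
    _ = ENNReal.ofReal (r+1) * ∫⁻ x in Ioi 0, m (Ioi x) * ENNReal.ofReal (x ^ r) := by
        rw [ENNReal.mul_inv_cancel hM0 hMt, mul_one]

lemma Lm_ne_top (m : Measure ℝ) [IsFiniteMeasure m] (h0 : m (Iio 0) = 0) {t u : ℝ}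
    (ht : 0 < t) (htu : t ≤ u) (hu : Lm m u ≠ ∞) : Lm m t ≠ ∞ := by
  have hb : Lm m t ≤ m univ + Lm m u := by
    have : ∀ᵐ x ∂m, ENNReal.ofReal (x ^ t) ≤ 1 + ENNReal.ofReal (x ^ u) := by
      filter_upwards [ae_nonneg_of_Iio m h0] with x hx0
      have hx : (0:ℝ) ≤ x := hx0
      rcases le_or_gt x 1 with h | h
      · calc ENNReal.ofReal (x ^ t) ≤ 1 := by
              rw [show (1:ℝ≥0∞) = ENNReal.ofReal 1 by simp]
              exact ENNReal.ofReal_le_ofReal (Real.rpow_le_one hx h ht.le)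
          _ ≤ 1 + ENNReal.ofReal (x ^ u) := le_self_add
      · calc ENNReal.ofReal (x ^ t) ≤ ENNReal.ofReal (x ^ u) :=
              ENNReal.ofReal_le_ofReal (Real.rpow_le_rpow_of_exponent_le h.le htu)
          _ ≤ 1 + ENNReal.ofReal (x ^ u) := le_add_self
    calc Lm m t ≤ ∫⁻ x, (1 + ENNReal.ofReal (x ^ u)) ∂m :=
          lintegral_mono_ae this
      _ = m univ + Lm m u := by
          rw [lintegral_add_left measurable_const, lintegral_one, Lm]
  intro htop
  rw [htop] at hb
  exact (ENNReal.add_lt_top.mpr ⟨measure_lt_top m univ, hu.lt_top⟩).ne (top_le_iff.mp hb)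

lemma Lm_ne_zero (m : Measure ℝ) (h0 : m (Iio 0) = 0) {t u : ℝ}
    (ht : 0 < t) (hu : 0 < u) (h : Lm m u ≠ 0) : Lm m t ≠ 0 := by
  intro hz
  apply h
  rw [Lm, lintegral_eq_zero_iff (measurable_ofReal_rpow t)] at hz
  rw [Lm, lintegral_eq_zero_iff (measurable_ofReal_rpow u)]
  filter_upwards [hz, ae_nonneg_of_Iio m h0] with x hx hx0'
  have hx0 : (0:ℝ) ≤ x := hx0'
  simp only [Pi.zero_apply, ENNReal.ofReal_eq_zero] at hx ⊢
  rcases eq_or_lt_of_le hx0 with h' | h'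
  · rw [← h', Real.zero_rpow hu.ne']
  · exact absurd hx (not_le.mpr (Real.rpow_pos_of_pos h' t))

lemma prod_ofReal_factorial (k : ℕ) :
    (∏ j ∈ Finset.range k, ENNReal.ofReal ((1:ℝ) + (j+1))) = ((k+1).factorial : ℝ≥0∞) := by
  induction k with
  | zero => simp
  | succ k ih =>
    rw [Finset.prod_range_succ, ih]
    have : ENNReal.ofReal ((1:ℝ) + (k+1)) = ((k+2 : ℕ) : ℝ≥0∞) := by
      rw [show (1:ℝ) + (k+1) = ((k+2 : ℕ) : ℝ) by push_cast; ring, ENNReal.ofReal_natCast]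
    rw [this, show (k+1+1) = k+2 by ring, Nat.factorial_succ (k+1)]
    push_cast
    ring

lemma Gamma_add_nat {x : ℝ} (hx : 0 < x) (k : ℕ) :
    Real.Gamma (x + k) = (∏ j ∈ Finset.range k, (x + j)) * Real.Gamma x := by
  induction k with
  | zero => simp
  | succ k ih =>
    have h1 : x + (k+1 : ℕ) = (x + k) + 1 := by push_cast; ring
    rw [h1, Real.Gamma_add_one (by positivity), ih, Finset.prod_range_succ]
    ring

end Stmt12Aux

namespace Stmt12Aux

lemma equilib_props (κ : Measure ℝ) [IsProbabilityMeasure κ] (hκ0 : κ (Iio 0) = 0)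
    (n : ℕ) (hn : 1 ≤ n) (hfin : Lm κ n ≠ ∞) (hpos : Lm κ n ≠ 0) :
    ∀ k, k ≤ n → (equilib κ k) (Iio 0) = 0 ∧ IsProbabilityMeasure (equilib κ k) ∧
      ∀ r : ℝ, -1 < r → r + k ≤ n →
        (∏ j ∈ Finset.range k, ENNReal.ofReal (r + (j+1))) * Lm κ k * Lm (equilib κ k) r
          = (k.factorial : ℝ≥0∞) * Lm κ (r + k) := by
  have hnpos : (0:ℝ) < n := by exact_mod_cast hn
  have hκz : ∀ t : ℝ, 0 < t → Lm κ t ≠ 0 := fun t ht => Lm_ne_zero κ hκ0 ht hnpos hpos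
  have hκt : ∀ t : ℝ, 0 < t → t ≤ n → Lm κ t ≠ ∞ := fun t ht htn =>
    Lm_ne_top κ hκ0 ht htn hfin
  intro k
  induction k with
  | zero =>
    intro _
    have he : equilib κ 0 = κ := rfl
    refine ⟨by rw [he]; exact hκ0, by rw [he]; infer_instance, fun r _ _ => ?_⟩
    rw [he]
    simp [Lm_zero, measure_univ]
  | succ k ih =>
    intro hk
    obtain ⟨h0k, hPk, hIH⟩ := ih (le_trans (Nat.le_succ k) hk)
    set m := equilib κ k with hm
    set M := ∫⁻ y, ENNReal.ofReal y ∂m with hMdef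
    have hkn : ((k:ℝ) + 1) ≤ (n:ℝ) := by exact_mod_cast hk
    -- moments of κ at k and k+1
    have hLk0 : Lm κ (k:ℝ) ≠ 0 := by
      rcases Nat.eq_zero_or_pos k with h | h
      · subst h; simp [Lm_zero, measure_univ]
      · exact hκz _ (by exact_mod_cast h)
    have hLkt : Lm κ (k:ℝ) ≠ ∞ := by
      rcases Nat.eq_zero_or_pos k with h | h
      · subst h; simp [Lm_zero, measure_univ]
      · exact hκt _ (by exact_mod_cast h) (by exact_mod_cast le_trans (Nat.le_succ k) hk)
    have hLk10 : Lm κ ((k:ℝ)+1) ≠ 0 := hκz _ (by positivity)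
    have hLk1t : Lm κ ((k:ℝ)+1) ≠ ∞ := hκt _ (by positivity) hkn
    -- the mean M of the k-th equilibrium measure
    have hMeq : (∏ j ∈ Finset.range k, ENNReal.ofReal ((1:ℝ) + (j+1))) * Lm κ k * M
        = (k.factorial : ℝ≥0∞) * Lm κ ((k:ℝ)+1) := by
      have := hIH 1 (by norm_num) (by linarith)
      rw [Lm_one, ← hMdef] at this
      rw [this, show (1:ℝ) + (k:ℝ) = (k:ℝ) + 1 from by ring]
    have hA1 : (∏ j ∈ Finset.range k, ENNReal.ofReal ((1:ℝ) + (j+1)))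
        = ((k+1).factorial : ℝ≥0∞) := prod_ofReal_factorial k
    have hA10 : (∏ j ∈ Finset.range k, ENNReal.ofReal ((1:ℝ) + (j+1))) ≠ 0 := by
      rw [hA1]; exact Nat.cast_ne_zero.mpr (Nat.factorial_ne_zero _)
    have hA1t : (∏ j ∈ Finset.range k, ENNReal.ofReal ((1:ℝ) + (j+1))) ≠ ∞ := by
      rw [hA1]; exact ENNReal.natCast_ne_top _
    have hM0 : M ≠ 0 := by
      intro h
      rw [h, mul_zero] at hMeq
      rcases mul_eq_zero.mp hMeq.symm with h' | h'
      · exact Nat.cast_ne_zero.mpr (Nat.factorial_ne_zero k) h'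
      · exact hLk10 h'
    have hMt : M ≠ ∞ := by
      intro h
      rw [h, ENNReal.mul_top (mul_ne_zero hA10 hLk0)] at hMeq
      exact ENNReal.mul_ne_top (ENNReal.natCast_ne_top _) hLk1t hMeq.symm
    -- conclusion
    refine ⟨by rw [equilib_succ]; exact step_Iio m, ?_, ?_⟩
    · refine ⟨?_⟩
      have hLm1 : Lm m 1 = M := by rw [Lm_one]
      have hmass := step_moment m h0k hM0 hMt (r := 0) (by norm_num)
      rw [← hMdef, show (0:ℝ) + 1 = 1 from by norm_num, hLm1] at hmass
      simp only [ENNReal.ofReal_one, one_mul] at hmass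
      rw [equilib_succ, ← hm, ← hMdef, ← Lm_zero]
      exact (ENNReal.mul_right_inj hM0 hMt).mp (hmass.trans (mul_one M).symm)
    · intro r hr hrk
      have hstep := step_moment m h0k hM0 hMt hr
      have hIH1 := hIH (r+1) (by linarith)
        (by push_cast at hrk ⊢; linarith)
      rw [show (r+1) + (k:ℝ) = r + ((k:ℝ)+1) from by ring] at hIH1
      have hsplit : (∏ j ∈ Finset.range (k+1), ENNReal.ofReal (r + (j+1)))
          = (∏ j ∈ Finset.range k, ENNReal.ofReal ((r+1) + (j+1))) * ENNReal.ofReal (r+1) := by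
        rw [Finset.prod_range_succ']
        congr 1
        · refine Finset.prod_congr rfl fun i _ => ?_
          congr 1
          push_cast
          ring
        · norm_num
      rw [show ((k+1:ℕ):ℝ) = (k:ℝ)+1 from by push_cast; ring, hsplit, equilib_succ, ← hm,
        ← hMdef, Nat.factorial_succ, show (((k+1) * k.factorial : ℕ) : ℝ≥0∞)
          = ((k+1:ℕ) : ℝ≥0∞) * (k.factorial : ℝ≥0∞) from by push_cast; ring]
      refine (ENNReal.mul_right_inj
        (mul_ne_zero (mul_ne_zero hA10 hLk0) hM0)
        (ENNReal.mul_ne_top (ENNReal.mul_ne_top hA1t hLkt) hMt)).mp ?_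
      set A1 := ∏ j ∈ Finset.range k, ENNReal.ofReal ((1:ℝ) + (j+1)) with hA1def
      set A' := ∏ j ∈ Finset.range k, ENNReal.ofReal ((r+1) + (j+1)) with hA'def
      set Ls := Lm ((volume.restrict (Ici (0:ℝ))).withDensity fun x => m (Ioi x) / M) r with hLs
      calc A1 * Lm κ (k:ℝ) * M * (A' * ENNReal.ofReal (r+1) * Lm κ ((k:ℝ)+1) * Ls)
          = (A1 * Lm κ ((k:ℝ)+1)) * ((A' * Lm κ (k:ℝ)) * (ENNReal.ofReal (r+1) * M * Ls)) := by
            ring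
        _ = (A1 * Lm κ ((k:ℝ)+1)) * (A' * Lm κ (k:ℝ) * Lm m (r+1)) := by rw [hstep, mul_assoc]
        _ = (A1 * Lm κ ((k:ℝ)+1)) * ((k.factorial : ℝ≥0∞) * Lm κ (r + ((k:ℝ)+1))) := by
            rw [hIH1]
        _ = ((k.factorial : ℝ≥0∞) * Lm κ ((k:ℝ)+1))
              * (((k+1:ℕ) : ℝ≥0∞) * (k.factorial : ℝ≥0∞) * Lm κ (r + ((k:ℝ)+1))) := by
            rw [hA1, show (((k+1).factorial : ℕ) : ℝ≥0∞)
              = ((k+1:ℕ) : ℝ≥0∞) * (k.factorial : ℝ≥0∞) from by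
                rw [Nat.factorial_succ]; push_cast; ring]
            ring
        _ = A1 * Lm κ (k:ℝ) * M
              * (((k+1:ℕ) : ℝ≥0∞) * (k.factorial : ℝ≥0∞) * Lm κ (r + ((k:ℝ)+1))) := by
            rw [hMeq]

end Stmt12Aux


open Stmt12Aux in
theorem stmt12 {Ω Ω' : Type*} [MeasurableSpace Ω] [MeasurableSpace Ω']
    (μ : Measure Ω) (ν : Measure Ω') [IsProbabilityMeasure μ] [IsProbabilityMeasure ν]
    (X : Ω → ℝ) (hX : Measurable X) (hXnn : ∀ ω, 0 ≤ X ω)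
    (n : ℕ) (hn : 1 ≤ n)
    (hmn_int : Integrable (fun ω => X ω ^ n) μ) (hmn_pos : 0 < ∫ ω, X ω ^ n ∂μ)
    -- `Y > 0` has distribution function `G = 1 - L_{(n)}`, where `L_{(n)}` is the
    -- Laplace–Stieltjes transform of the `n`-th order equilibrium distribution of `X`
    (Y : Ω' → ℝ) (hY : Measurable Y) (hYpos : ∀ ω, 0 < Y ω)
    (hYdist : ∀ y : ℝ, 0 ≤ y →
      ν {ω | Y ω ≤ y}
        = ENNReal.ofReal (1 - ∫ x, Real.exp (-(y * x)) ∂(equilib (Measure.map X μ) n)))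
    (s : ℝ) (hs1 : (n : ℝ) - 1 < s) (hs2 : s < n)
    (hint : Integrable (fun ω => X ω ^ s) μ) :
    ∫ ω, Y ω ^ ((n : ℝ) - s) ∂ν
      = (Nat.factorial n) * ((n : ℝ) - s) * π
          / ((∫ ω, X ω ^ n ∂μ) * Real.Gamma (s + 1) * Real.sin (((n : ℝ) - s) * π))
        * ∫ ω, X ω ^ s ∂μ := by
  set p : ℝ := (n:ℝ) - s with hpdef
  have hp0 : 0 < p := by rw [hpdef]; linarith
  have hp1 : p < 1 := by rw [hpdef]; linarith
  set κ := Measure.map X μ with hκdef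
  haveI hκP : IsProbabilityMeasure κ := Measure.isProbabilityMeasure_map hX.aemeasurable
  have hκ0 : κ (Iio 0) = 0 := by
    rw [hκdef, Measure.map_apply hX measurableSet_Iio]
    have : X ⁻¹' Iio 0 = ∅ :=
      eq_empty_iff_forall_notMem.mpr fun ω h => absurd (hXnn ω) (by simpa using h)
    simp [this]
  have hms_nonneg : (0:ℝ) ≤ ∫ ω, X ω ^ s ∂μ :=
    integral_nonneg fun ω => Real.rpow_nonneg (hXnn ω) s
  have hms : ENNReal.ofReal (∫ ω, X ω ^ s ∂μ) = Lm κ s := by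
    rw [ofReal_integral_eq_lintegral_ofReal hint
      (ae_of_all μ fun ω => Real.rpow_nonneg (hXnn ω) s), Lm, hκdef,
      lintegral_map (measurable_ofReal_rpow s) hX]
  have hmn : ENNReal.ofReal (∫ ω, X ω ^ n ∂μ) = Lm κ n := by
    rw [ofReal_integral_eq_lintegral_ofReal hmn_int
      (ae_of_all μ fun ω => pow_nonneg (hXnn ω) n), Lm, hκdef,
      lintegral_map (measurable_ofReal_rpow n) hX]
    refine lintegral_congr fun ω => ?_
    rw [Real.rpow_natCast]
  have hfin : Lm κ n ≠ ∞ := by rw [← hmn]; exact ENNReal.ofReal_ne_top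
  have hposn : Lm κ n ≠ 0 := by rw [← hmn]; exact (ENNReal.ofReal_pos.mpr hmn_pos).ne'
  obtain ⟨h0n, hPn, hform⟩ := equilib_props κ hκ0 n hn hfin hposn n le_rfl
  set μn := equilib κ n with hμn
  haveI : IsProbabilityMeasure μn := hPn
  have hsing : μn {0} = 0 := by
    obtain ⟨m', hm'⟩ : ∃ m', n = m' + 1 := ⟨n - 1, by omega⟩
    rw [hμn, hm', equilib_succ]
    exact step_singleton _
  have hIic : μn (Iic 0) = 0 := by
    have h1 : Iic (0:ℝ) = Iio 0 ∪ {0} := by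
      ext x; simp [le_iff_lt_or_eq]
    rw [h1]
    exact le_antisymm (le_trans (measure_union_le _ _) (by rw [h0n, hsing]; simp)) (zero_le)
  have hae_pos : ∀ᵐ x ∂μn, 0 < x := by
    rw [ae_iff]
    convert hIic using 2
    ext x; simp [not_lt]
  -- tail probabilities of `Y` in terms of the Laplace transform
  have hLlap : ∀ t : ℝ, 0 ≤ t →
      ν {a | t < Y a} = ∫⁻ x, ENNReal.ofReal (Real.exp (-(t * x))) ∂μn := by
    intro t ht
    have hmeas_exp : Measurable fun x : ℝ => Real.exp (-(t * x)) :=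
      (measurable_const.mul measurable_id).neg.exp
    have hint_exp : Integrable (fun x => Real.exp (-(t * x))) μn := by
      refine ⟨hmeas_exp.aestronglyMeasurable, ?_⟩
      refine HasFiniteIntegral.of_bounded (C := 1) ?_
      filter_upwards [hae_pos] with x hx
      rw [Real.norm_eq_abs, abs_of_pos (Real.exp_pos _)]
      exact Real.exp_le_one_iff.mpr (by nlinarith)
    have hL0 : 0 ≤ ∫ x, Real.exp (-(t * x)) ∂μn :=
      integral_nonneg fun x => (Real.exp_pos _).le
    have hL1 : ∫ x, Real.exp (-(t * x)) ∂μn ≤ 1 := by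
      calc ∫ x, Real.exp (-(t * x)) ∂μn ≤ ∫ _x, (1:ℝ) ∂μn := by
            refine integral_mono_ae hint_exp (integrable_const 1) ?_
            filter_upwards [hae_pos] with x hx
            exact Real.exp_le_one_iff.mpr (by nlinarith)
        _ = 1 := by simp
    have hset : {a | t < Y a} = {a | Y a ≤ t}ᶜ := by ext a; simp [not_le]
    rw [hset, prob_compl_eq_one_sub (show MeasurableSet {a | Y a ≤ t} from hY measurableSet_Iic), hYdist t ht,
      ENNReal.ofReal_sub _ hL0, ENNReal.ofReal_one,
      ENNReal.sub_sub_cancel ENNReal.one_ne_top (ENNReal.ofReal_le_one.mpr hL1)]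
    exact ofReal_integral_eq_lintegral_ofReal hint_exp (ae_of_all _ fun x => (Real.exp_pos _).le)
  -- layer cake for `Y ^ p`
  have hT := lintegral_rpow_eq_lintegral_meas_lt_mul ν
    (ae_of_all ν fun a => (hYpos a).le) hY.aemeasurable hp0
  have hstep1 : ∫⁻ t in Ioi 0, ν {a | t < Y a} * ENNReal.ofReal (t ^ (p-1))
      = ∫⁻ t in Ioi 0, ∫⁻ x,
          ENNReal.ofReal (Real.exp (-(t * x))) * ENNReal.ofReal (t ^ (p-1)) ∂μn := by
    refine setLIntegral_congr_fun measurableSet_Ioi (fun t ht => ?_)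
    rw [hLlap t (le_of_lt ht), lintegral_mul_const' _ _ ENNReal.ofReal_ne_top]
  have hswap : ∫⁻ t in Ioi 0, ∫⁻ x,
        ENNReal.ofReal (Real.exp (-(t * x))) * ENNReal.ofReal (t ^ (p-1)) ∂μn
      = ∫⁻ x, ∫⁻ t in Ioi 0,
          ENNReal.ofReal (Real.exp (-(t * x))) * ENNReal.ofReal (t ^ (p-1)) ∂volume ∂μn := by
    apply lintegral_lintegral_swap
    apply Measurable.aemeasurable
    exact ((measurable_fst.mul measurable_snd).neg.exp.ennreal_ofReal).mul
      ((measurable_fst.pow measurable_const).ennreal_ofReal)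
  have hinner : ∀ᵐ x ∂μn, (∫⁻ t in Ioi 0,
        ENNReal.ofReal (Real.exp (-(t * x))) * ENNReal.ofReal (t ^ (p-1)))
      = ENNReal.ofReal (Real.Gamma p) * ENNReal.ofReal (x ^ (s - (n:ℝ))) := by
    filter_upwards [hae_pos] with x hx
    have h1 : ∀ t : ℝ, t ∈ Ioi (0:ℝ) →
        ENNReal.ofReal (Real.exp (-(t * x))) * ENNReal.ofReal (t ^ (p-1))
          = ENNReal.ofReal (t ^ (p-1) * Real.exp (-(x * t))) := by
      intro t _
      rw [← ENNReal.ofReal_mul (Real.exp_nonneg _), mul_comm (Real.exp _) _, mul_comm t x]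
    rw [setLIntegral_congr_fun measurableSet_Ioi h1]
    have hint2 : IntegrableOn (fun t : ℝ => t ^ (p-1) * Real.exp (-(x * t))) (Ioi 0) := by
      have h2 := integrableOn_rpow_mul_exp_neg_mul_rpow (p := 1) (s := p - 1) (b := x)
        (by linarith) one_pos hx
      refine h2.congr_fun (fun t ht => ?_) measurableSet_Ioi
      simp only [Real.rpow_one, neg_mul]
    have hnn2 : 0 ≤ᵐ[volume.restrict (Ioi 0)]
        fun t : ℝ => t ^ (p-1) * Real.exp (-(x * t)) := by
      filter_upwards [self_mem_ae_restrict (measurableSet_Ioi : MeasurableSet (Ioi (0:ℝ)))]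
        with t ht
      exact mul_nonneg (Real.rpow_nonneg (le_of_lt ht) _) (Real.exp_nonneg _)
    rw [← ofReal_integral_eq_lintegral_ofReal hint2 hnn2,
      integral_rpow_mul_exp_neg_mul_Ioi hp0 hx, one_div,
      show s - (n:ℝ) = -p from by rw [hpdef]; ring,
      Real.inv_rpow hx.le, Real.rpow_neg hx.le,
      ENNReal.ofReal_mul (by positivity), mul_comm]
  have hT2 : ∫⁻ a, ENNReal.ofReal (Y a ^ p) ∂ν
      = ENNReal.ofReal p * (ENNReal.ofReal (Real.Gamma p) * Lm μn (s - (n:ℝ))) := by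
    rw [hT, hstep1, hswap, lintegral_congr_ae hinner,
      lintegral_const_mul _ (measurable_ofReal_rpow _)]
    rfl
  -- moment formula at `k = n`, `r = s - n`
  have hform' := hform (s - (n:ℝ)) (by linarith) (by rw [sub_add_cancel]; exact hs2.le)
  rw [sub_add_cancel] at hform'
  -- the real value of the Pochhammer product
  set Q : ℝ := ∏ j ∈ Finset.range n, (s - (n:ℝ) + ((j:ℝ)+1)) with hQdef
  have hfactpos : ∀ j ∈ Finset.range n, (0:ℝ) < s - (n:ℝ) + ((j:ℝ)+1) := by
    intro j _
    have hj : (0:ℝ) ≤ j := Nat.cast_nonneg j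
    linarith
  have hQpos : 0 < Q := Finset.prod_pos hfactpos
  have hPQ : (∏ j ∈ Finset.range n, ENNReal.ofReal (s - (n:ℝ) + ((j:ℝ)+1)))
      = ENNReal.ofReal Q :=
    (ENNReal.ofReal_prod_of_nonneg (fun j hj => (hfactpos j hj).le)).symm
  have hkey : ENNReal.ofReal Q * ENNReal.ofReal (∫ ω, X ω ^ n ∂μ)
        * (∫⁻ a, ENNReal.ofReal (Y a ^ p) ∂ν)
      = ENNReal.ofReal p * ENNReal.ofReal (Real.Gamma p)
        * ((n.factorial : ℝ≥0∞) * ENNReal.ofReal (∫ ω, X ω ^ s ∂μ)) := by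
    rw [hT2, hmn, hms, ← hform', ← hPQ]
    ring
  have hIto : ∫ a, Y a ^ p ∂ν = (∫⁻ a, ENNReal.ofReal (Y a ^ p) ∂ν).toReal := by
    rw [integral_eq_lintegral_of_nonneg_ae
      (ae_of_all _ fun a => Real.rpow_nonneg (hYpos a).le p)
      ((hY.pow measurable_const).aestronglyMeasurable)]
  have hreal : Q * (∫ ω, X ω ^ n ∂μ) * ∫ a, Y a ^ p ∂ν
      = p * Real.Gamma p * ((n.factorial : ℝ) * ∫ ω, X ω ^ s ∂μ) := by
    have h := congrArg ENNReal.toReal hkey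
    simp only [ENNReal.toReal_mul, ENNReal.toReal_ofReal hQpos.le,
      ENNReal.toReal_ofReal hp0.le,
      ENNReal.toReal_ofReal (Real.Gamma_pos_of_pos hp0).le,
      ENNReal.toReal_ofReal hms_nonneg, ENNReal.toReal_ofReal hmn_pos.le,
      ENNReal.toReal_natCast] at h
    rw [hIto]
    exact h
  -- Gamma identities
  have hq0 : 0 < s - (n:ℝ) + 1 := by linarith
  have hGrec : Real.Gamma (s+1) = Q * Real.Gamma (s - (n:ℝ) + 1) := by
    have h := Gamma_add_nat hq0 n
    rw [show s - (n:ℝ) + 1 + (n:ℝ) = s + 1 from by ring] at h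
    rw [h, hQdef]
    congr 1
    exact Finset.prod_congr rfl fun j _ => by ring
  have hsinpos : 0 < Real.sin (π * p) :=
    Real.sin_pos_of_pos_of_lt_pi (by positivity) (by nlinarith [Real.pi_pos])
  have hrefl' : Real.Gamma p * Real.Gamma (s - (n:ℝ) + 1) * Real.sin (π * p) = π := by
    have h := Real.Gamma_mul_Gamma_one_sub p
    rw [show (1:ℝ) - p = s - (n:ℝ) + 1 from by rw [hpdef]; ring] at h
    rw [h, div_mul_cancel₀ _ hsinpos.ne']
  rw [show Real.sin (p * π) = Real.sin (π * p) from by rw [mul_comm], hGrec,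
    div_mul_eq_mul_div, eq_div_iff (by positivity)]
  linear_combination (Real.Gamma (s - (n:ℝ) + 1) * Real.sin (π * p)) * hreal
    + ((n.factorial : ℝ) * p * (∫ ω, X ω ^ s ∂μ)) * hrefl'
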